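/- Let f be α-strongly convex and L-smooth with 0 < α < L, let γ, β > 0, let X ⊆ E be nonempty and compact, let Π be a projection selection onto X, and let T_μ be the inner-algorithm (NExOS) operator. Then for every x̄ ∈ E, every r_max > 0 and every μ_max > 0 there exists ℓ > 0 such that for all μ₁, μ₂ ∈ (0, μ_max] and all x ∈ B(x̄, r_max) one has ‖T_{μ₁}(x) − T_{μ₂}(x)‖ ≤ ℓ·|μ₁ − μ₂|. -/

import Mathlib

/-- The inner-algorithm (NExOS) operator `T_μ` with projection selection `proj`
onto `X`: with `κ := 1/(βγ+1)` and `θ_μ := μ/(γκ+μ)`,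
`T_μ(z) := z + θ_μ·κ·(2·prox_{γf}(z) − z) + (1 − θ_μ)·proj(κ·(2·prox_{γf}(z) − z)) − prox_{γf}(z)`. -/
noncomputable def nexosT {E : Type*} [NormedAddCommGroup E] [InnerProductSpace ℝ E]
    (proxf proj : E → E) (β γ μ : ℝ) (z : E) : E :=
  z + (μ / (γ * (1 / (β * γ + 1)) + μ)) • ((1 / (β * γ + 1)) • ((2 : ℝ) • proxf z - z))
    + (1 - μ / (γ * (1 / (β * γ + 1)) + μ)) • proj ((1 / (β * γ + 1)) • ((2 : ℝ) • proxf z - z))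
    - proxf z

/-!
The difference `T_{μ₁}(x) - T_{μ₂}(x)` equals `(θ_{μ₁} - θ_{μ₂}) • (w - Π w)` with
`w = κ • (2 • prox_{γf}(x) - x)`, and `‖w - Π w‖ = d(w)`. The map `μ ↦ μ / (γκ + μ)` is
`1 / (γκ)`-Lipschitz on `μ ≥ 0`, and `d(w)` is bounded on the ball since `prox_{γf}` is
`1 / (1 + αγ)`-Lipschitz: the prox objective is `(α + 1/γ)`-strongly convex, so it grows
quadratically away from its minimizer, and adding the growth inequalities at two prox points
gives `(1 + αγ) ‖p₁ - p₂‖² ≤ ⟪p₁ - p₂, z₁ - z₂⟫`.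
-/

open Set RealInnerProductSpace

lemma infDist_le_norm_add_norm {E : Type*} [SeminormedAddCommGroup E] {X : Set E} {x₀ : E}
    (hx₀ : x₀ ∈ X) (w : E) :
    Metric.infDist w X ≤ ‖w‖ + ‖x₀‖ :=
  (Metric.infDist_le_dist_of_mem hx₀).trans (dist_eq_norm w x₀ ▸ norm_sub_le w x₀)

lemma abs_div_add_sub_div_add_le {c μ₁ μ₂ : ℝ} (hc : 0 < c) (hμ₁ : 0 ≤ μ₁) (hμ₂ : 0 ≤ μ₂) :
    |μ₁ / (c + μ₁) - μ₂ / (c + μ₂)| ≤ |μ₁ - μ₂| / c := by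
  have hd₁ : 0 < c + μ₁ := by linarith
  have hd₂ : 0 < c + μ₂ := by linarith
  have hsub : μ₁ / (c + μ₁) - μ₂ / (c + μ₂) = c * (μ₁ - μ₂) / ((c + μ₁) * (c + μ₂)) := by
    field_simp
    ring
  rw [hsub, abs_div, abs_mul, abs_of_pos hc, abs_of_pos (mul_pos hd₁ hd₂),
    div_le_div_iff₀ (mul_pos hd₁ hd₂) hc]
  have hden : c * c ≤ (c + μ₁) * (c + μ₂) := by nlinarith
  calc c * |μ₁ - μ₂| * c = |μ₁ - μ₂| * (c * c) := by ring
    _ ≤ |μ₁ - μ₂| * ((c + μ₁) * (c + μ₂)) := by gcongr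

section

variable {E : Type*} [NormedAddCommGroup E] [InnerProductSpace ℝ E]

lemma convexOn_sq_norm_sub_sub_sq_norm (z : E) :
    ConvexOn ℝ univ fun y : E => ‖y - z‖ ^ 2 - ‖y‖ ^ 2 := by
  have hlin : ConcaveOn ℝ univ fun y : E => (2 : ℝ) • ⟪z, y⟫ :=
    ((innerSL ℝ z).toLinearMap.concaveOn convex_univ).smul zero_le_two
  refine ((convexOn_const (‖z‖ ^ 2) convex_univ).sub hlin).congr fun y _ => ?_
  simp only [Pi.sub_apply, smul_eq_mul, norm_sub_sq_real, real_inner_comm]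
  ring

lemma StrongConvexOn.add_mul_sq_norm_sub_le_of_isMinOn {s : Set E} {m : ℝ} {φ : E → ℝ} {p y : E}
    (hφ : StrongConvexOn s m φ) (hp : IsMinOn φ s p) (hps : p ∈ s) (hy : y ∈ s) :
    φ p + m / 2 * ‖y - p‖ ^ 2 ≤ φ y := by
  have hgrowth : ∀ t ∈ Ioo (0 : ℝ) 1, φ p + (1 - t) * (m / 2 * ‖y - p‖ ^ 2) ≤ φ y := by
    rintro t ⟨ht₀, ht₁⟩
    -- compare `φ p` with `φ` at the point `(1 - t) • p + t • y` of the segment, then divide by `t`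
    have hconv := hφ.2 hps hy (sub_nonneg.2 ht₁.le) ht₀.le (sub_add_cancel 1 t)
    have hmin := isMinOn_iff.1 hp _
      (hφ.1 hps hy (sub_nonneg.2 ht₁.le) ht₀.le (sub_add_cancel 1 t))
    rw [norm_sub_rev] at hconv
    simp only [smul_eq_mul] at hconv
    nlinarith
  have hlim : Filter.Tendsto (fun t : ℝ => φ p + (1 - t) * (m / 2 * ‖y - p‖ ^ 2))
      (nhdsWithin 0 (Ioo 0 1)) (nhds (φ p + (1 - 0) * (m / 2 * ‖y - p‖ ^ 2))) :=
    (Continuous.tendsto (by fun_prop) 0).mono_left nhdsWithin_le_nhds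
  rw [sub_zero, one_mul] at hlim
  have : (nhdsWithin (0 : ℝ) (Ioo 0 1)).NeBot := left_nhdsWithin_Ioo_neBot zero_lt_one
  exact le_of_tendsto hlim (eventually_nhdsWithin_of_forall hgrowth)

lemma StrongConvexOn.add_mul_sq_norm_sub {f : E → ℝ} {α c : ℝ} (hf : StrongConvexOn univ α f)
    (hc : 0 ≤ c) (z : E) :
    StrongConvexOn univ (α + 2 * c) fun y => f y + c * ‖y - z‖ ^ 2 := by
  refine strongConvexOn_iff_convex.2 <|
    ((strongConvexOn_iff_convex.1 hf).add ((convexOn_sq_norm_sub_sub_sq_norm z).smul hc)).congr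
      fun y _ => ?_
  simp only [Pi.add_apply, smul_eq_mul]
  ring

lemma one_add_mul_mul_norm_prox_sub_le {f : E → ℝ} {α γ : ℝ} (hf : StrongConvexOn univ α f)
    (hγ : 0 < γ) {proxf : E → E}
    (hproxf : ∀ z, IsMinOn (fun y => f y + 1 / (2 * γ) * ‖y - z‖ ^ 2) univ (proxf z))
    (z₁ z₂ : E) :
    (1 + α * γ) * ‖proxf z₁ - proxf z₂‖ ≤ ‖z₁ - z₂‖ := by
  have hφ := hf.add_mul_sq_norm_sub (by positivity : 0 ≤ 1 / (2 * γ))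
  have h₁ := (hφ z₁).add_mul_sq_norm_sub_le_of_isMinOn (hproxf z₁) (mem_univ _)
    (mem_univ (proxf z₂))
  have h₂ := (hφ z₂).add_mul_sq_norm_sub_le_of_isMinOn (hproxf z₂) (mem_univ _)
    (mem_univ (proxf z₁))
  rw [norm_sub_rev (proxf z₂) (proxf z₁)] at h₁
  set q := proxf z₁ - proxf z₂
  have hpolar : ‖proxf z₂ - z₁‖ ^ 2 - ‖proxf z₁ - z₁‖ ^ 2 + ‖proxf z₁ - z₂‖ ^ 2
      - ‖proxf z₂ - z₂‖ ^ 2 = 2 * ⟪q, z₁ - z₂⟫ := by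
    simp only [q, norm_sub_sq_real, inner_sub_left, inner_sub_right, real_inner_comm]
    ring
  have hmono : (1 + α * γ) * ‖q‖ ^ 2 ≤ ⟪q, z₁ - z₂⟫ := by
    have hsum : (α + 2 * (1 / (2 * γ))) * ‖q‖ ^ 2 ≤ 1 / (2 * γ) * (2 * ⟪q, z₁ - z₂⟫) := by
      linear_combination h₁ + h₂ + 1 / (2 * γ) * hpolar
    calc (1 + α * γ) * ‖q‖ ^ 2 = γ * ((α + 2 * (1 / (2 * γ))) * ‖q‖ ^ 2) := by
          field_simp
          ring
      _ ≤ γ * (1 / (2 * γ) * (2 * ⟪q, z₁ - z₂⟫)) := by gcongr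
      _ = ⟪q, z₁ - z₂⟫ := by field_simp
  have hcs := real_inner_le_norm q (z₁ - z₂)
  rcases (norm_nonneg q).eq_or_lt with hq | hq
  · rw [← hq, mul_zero]; exact norm_nonneg _
  · nlinarith

lemma norm_prox_le_of_mem_ball {f : E → ℝ} {α γ r : ℝ} (hf : StrongConvexOn univ α f)
    (hα : 0 ≤ α) (hγ : 0 < γ) {proxf : E → E}
    (hproxf : ∀ z, IsMinOn (fun y => f y + 1 / (2 * γ) * ‖y - z‖ ^ 2) univ (proxf z))
    {c x : E} (hx : x ∈ Metric.ball c r) :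
    ‖proxf x‖ ≤ ‖proxf c‖ + r := by
  have hlip := one_add_mul_mul_norm_prox_sub_le hf hγ hproxf x c
  have hxc : ‖x - c‖ < r := by rwa [← dist_eq_norm]
  have hαγ : 0 ≤ α * γ := by positivity
  calc ‖proxf x‖ ≤ ‖proxf c‖ + ‖proxf x - proxf c‖ := norm_le_norm_add_norm_sub' _ _
    _ ≤ ‖proxf c‖ + r := by nlinarith [norm_nonneg (proxf x - proxf c)]

lemma nexosT_sub_nexosT (proxf proj : E → E) (β γ μ₁ μ₂ : ℝ) (z : E) :
    nexosT proxf proj β γ μ₁ z - nexosT proxf proj β γ μ₂ z =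
      (μ₁ / (γ * (1 / (β * γ + 1)) + μ₁) - μ₂ / (γ * (1 / (β * γ + 1)) + μ₂)) •
        ((1 / (β * γ + 1)) • ((2 : ℝ) • proxf z - z)
          - proj ((1 / (β * γ + 1)) • ((2 : ℝ) • proxf z - z))) := by
  simp only [nexosT]
  module

end

theorem nexos_operator_lipschitz_in_mu
    {E : Type*} [NormedAddCommGroup E] [InnerProductSpace ℝ E]
    (X : Set E) (hXne : X.Nonempty)
    (f : E → ℝ) (α β γ : ℝ)
    (hα : 0 < α)
    (hsc : ConvexOn ℝ Set.univ (fun y => f y - α / 2 * ‖y‖ ^ 2))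
    (hβ : 0 < β) (hγ : 0 < γ)
    (proxf : E → E)
    (hproxf : ∀ z : E,
      IsMinOn (fun y => f y + 1 / (2 * γ) * ‖y - z‖ ^ 2) Set.univ (proxf z))
    -- `proj` is a projection selection onto `X`
    (proj : E → E)
    (hproj : ∀ w : E, proj w ∈ X ∧ ‖w - proj w‖ = Metric.infDist w X) :
    ∀ (xbar : E) (rmax μmax : ℝ), 0 < rmax → 0 < μmax →
      ∃ ℓ > (0 : ℝ), ∀ μ₁ μ₂ : ℝ, 0 < μ₁ → μ₁ ≤ μmax → 0 < μ₂ → μ₂ ≤ μmax →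
        ∀ x ∈ Metric.ball xbar rmax,
          ‖nexosT proxf proj β γ μ₁ x - nexosT proxf proj β γ μ₂ x‖ ≤ ℓ * |μ₁ - μ₂| := by
  intro xbar rmax μmax hr _
  obtain ⟨x₀, hx₀⟩ := hXne
  set κ : ℝ := 1 / (β * γ + 1)
  have hc : 0 < γ * κ := by positivity
  set D := κ * (2 * (‖proxf xbar‖ + rmax) + (‖xbar‖ + rmax)) + ‖x₀‖
  have hgap : ∀ x ∈ Metric.ball xbar rmax,
      ‖κ • ((2 : ℝ) • proxf x - x) - proj (κ • ((2 : ℝ) • proxf x - x))‖ ≤ D := by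
    intro x hx
    rw [(hproj _).2]
    calc _ ≤ ‖κ • ((2 : ℝ) • proxf x - x)‖ + ‖x₀‖ := infDist_le_norm_add_norm hx₀ _
      _ ≤ κ * (‖(2 : ℝ) • proxf x‖ + ‖x‖) + ‖x₀‖ := by
          rw [norm_smul, Real.norm_of_nonneg (by positivity)]
          exact add_le_add_left
            (mul_le_mul_of_nonneg_left (norm_sub_le ((2 : ℝ) • proxf x) x) (by positivity)) _
      _ ≤ D := by
          rw [norm_smul, Real.norm_two]
          simp only [D]
          gcongr
          · exact norm_prox_le_of_mem_ball (strongConvexOn_iff_convex.2 hsc) hα.le hγ hproxf hx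
          · exact (norm_lt_of_mem_ball hx).le
  refine ⟨D / (γ * κ), by positivity, fun μ₁ μ₂ hμ₁ _ hμ₂ _ x hx => ?_⟩
  rw [nexosT_sub_nexosT, norm_smul, Real.norm_eq_abs]
  calc _ ≤ |μ₁ - μ₂| / (γ * κ) * D :=
        mul_le_mul (abs_div_add_sub_div_add_le hc hμ₁.le hμ₂.le) (hgap x hx) (norm_nonneg _)
          (by positivity)
    _ = D / (γ * κ) * |μ₁ - μ₂| := by ring
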